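/- Let g be a (right) Leibniz algebra over a field k of characteristic zero. Let j ≥ 1 and let X_i ∈ L_{n_i} for 1 ≤ i ≤ j with each n_i ≥ 1; set n(i) := n_1 + … + n_{i−1} (so n(1) = 0) and N := n_1 + … + n_j. Then the Leibniz differential of the concatenation X₁⊗…⊗X_j ∈ g^{⊗N} is given by d_N(X₁⊗…⊗X_j) = Σ_{i=1}^j (−1)^{n(i)} X₁⊗…⊗X_{i−1}⊗(d_{n_i} X_i)⊗X_{i+1}⊗…⊗X_j + Σ_{i : n_i = 1} (−1)^{n(i)} ((X₁⊗…⊗X_{i−1})·X_i)⊗X_{i+1}⊗…⊗X_j, where in the second sum X_i ∈ L_1 = g, the dot denotes the diagonal right action of g on g^{⊗n(i)}, and the i = 1 term of the second sum is zero (the action on scalars is zero). -/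
import Mathlib


open scoped TensorProduct

/-- The pure tensor `x 0 ⊗ x 1 ⊗ ... ⊗ x (n-1)`, viewed inside the tensor algebra
`T(g) = ⊕ₙ g^{⊗n}`. -/
noncomputable def pt (k : Type*) [CommSemiring k] {g : Type*} [AddCommMonoid g] [Module k g]
    {n : ℕ} (x : Fin n → g) : TensorAlgebra k g :=
  (List.ofFn fun i => TensorAlgebra.ι k (x i)).prod

/-- The degree-`n` component `g^{⊗n}` of the tensor algebra: the span of the pure tensors of
length `n`. -/
noncomputable def tensorGrade (k : Type*) [CommSemiring k] (g : Type*) [AddCommMonoid g]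
    [Module k g] (n : ℕ) : Submodule k (TensorAlgebra k g) :=
  Submodule.span k {z | ∃ x : Fin n → g, z = pt k x}

set_option linter.unusedVariables false

section Aux
variable {k : Type*} [Field k] {g : Type*} [AddCommGroup g] [Module k g]

lemma pt_zero (x : Fin 0 → g) : pt k x = 1 := by simp [pt]

lemma pt_one (x : Fin 1 → g) : pt k x = TensorAlgebra.ι k (x 0) := by simp [pt]

lemma pt_snoc {m : ℕ} (x : Fin m → g) (z : g) :
    pt k (Fin.snoc x z) = pt k x * TensorAlgebra.ι k z := by
  unfold pt
  rw [List.ofFn_succ', List.concat_eq_append, List.prod_append]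
  simp

lemma pt_mem {n : ℕ} (x : Fin n → g) : pt k x ∈ tensorGrade k g n :=
  Submodule.subset_span ⟨x, rfl⟩

lemma one_mem_grade : (1 : TensorAlgebra k g) ∈ tensorGrade k g 0 := by
  have := pt_mem (k := k) (fun i : Fin 0 => (0 : g))
  rwa [pt_zero] at this

lemma iota_mem_grade (z : g) : TensorAlgebra.ι k z ∈ tensorGrade k g 1 := by
  have := pt_mem (k := k) (fun _ : Fin 1 => z)
  rwa [pt_one] at this

lemma grade_induction {n : ℕ} {P : TensorAlgebra k g → Prop}
    (h0 : P 0) (hadd : ∀ u v, P u → P v → P (u + v))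
    (hsmul : ∀ (c : k) u, P u → P (c • u))
    (hgen : ∀ x : Fin n → g, P (pt k x)) : ∀ U ∈ tensorGrade k g n, P U := by
  intro U hU
  refine Submodule.span_induction (p := fun z _ => P z) ?_ h0
    (fun a b _ _ ha hb => hadd a b ha hb) (fun c u _ hu => hsmul c u hu) hU
  rintro z ⟨x, rfl⟩; exact hgen x

lemma grade_mul_iota {a : ℕ} {U : TensorAlgebra k g} (hU : U ∈ tensorGrade k g a) (z : g) :
    U * TensorAlgebra.ι k z ∈ tensorGrade k g (a + 1) := by
  refine grade_induction (P := fun U => U * TensorAlgebra.ι k z ∈ tensorGrade k g (a+1))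
    ?_ ?_ ?_ ?_ U hU
  · simpa using (tensorGrade k g (a+1)).zero_mem
  · intro u v hu hv; rw [add_mul]; exact (tensorGrade k g (a+1)).add_mem hu hv
  · intro c u hu; rw [smul_mul_assoc]; exact (tensorGrade k g (a+1)).smul_mem c hu
  · intro x; rw [← pt_snoc]; exact pt_mem _

lemma grade_mul : ∀ (b : ℕ) (V : TensorAlgebra k g), V ∈ tensorGrade k g b →
    ∀ (a : ℕ) (U : TensorAlgebra k g), U ∈ tensorGrade k g a →
    U * V ∈ tensorGrade k g (a + b) := by
  intro b
  induction b with
  | zero =>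
    intro V hV a U hU
    refine grade_induction (P := fun V => U * V ∈ tensorGrade k g (a+0)) ?_ ?_ ?_ ?_ V hV
    · simpa using (tensorGrade k g (a+0)).zero_mem
    · intro u v hu hv; rw [mul_add]; exact (tensorGrade k g (a+0)).add_mem hu hv
    · intro c u hu; rw [mul_smul_comm]; exact (tensorGrade k g (a+0)).smul_mem c hu
    · intro x; rw [pt_zero, mul_one]; exact hU
  | succ b ih =>
    intro V hV a U hU
    refine grade_induction (P := fun V => U * V ∈ tensorGrade k g (a+(b+1))) ?_ ?_ ?_ ?_ V hV
    · simpa using (tensorGrade k g (a+(b+1))).zero_mem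
    · intro u v hu hv; rw [mul_add]; exact (tensorGrade k g (a+(b+1))).add_mem hu hv
    · intro c u hu; rw [mul_smul_comm]; exact (tensorGrade k g (a+(b+1))).smul_mem c hu
    · intro x
      rw [← Fin.snoc_init_self x, pt_snoc, ← mul_assoc]
      exact grade_mul_iota (ih _ (pt_mem _) a U hU) _


variable (mul : g →ₗ[k] g →ₗ[k] g)
variable (D : TensorAlgebra k g →ₗ[k] TensorAlgebra k g)
variable (act : TensorAlgebra k g →ₗ[k] g →ₗ[k] TensorAlgebra k g)

lemma D_iota
    (hD : ∀ (m : ℕ) (x : Fin (m + 1) → g),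
      D (pt k x) = ∑ j : Fin (m + 1),
        ∑ i ∈ Finset.univ.filter (fun i : Fin m => i.castSucc < j),
          ((-1 : k) ^ (j : ℕ)) •
            pt k (Function.update (fun a : Fin m => x (j.succAbove a)) i
              (mul (x i.castSucc) (x j))))
    (z : g) : D (TensorAlgebra.ι k z) = 0 := by
  have h := hD 0 (fun _ => z)
  rw [pt_one] at h
  simpa using h

lemma act_one
    (hact : ∀ (n : ℕ) (x : Fin n → g) (y : g),
      act (pt k x) y = ∑ i : Fin n, pt k (Function.update x i (mul (x i) y)))
    (y : g) : act 1 y = 0 := by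
  have h := hact 0 (fun i : Fin 0 => (0 : g)) y
  rw [pt_zero] at h
  simpa using h

lemma act_iota
    (hact : ∀ (n : ℕ) (x : Fin n → g) (y : g),
      act (pt k x) y = ∑ i : Fin n, pt k (Function.update x i (mul (x i) y)))
    (z y : g) : act (TensorAlgebra.ι k z) y = TensorAlgebra.ι k (mul z y) := by
  have h := hact 1 (fun _ => z) y
  rw [pt_one] at h
  rw [h, Fin.sum_univ_one, pt_one]
  simp

lemma act_mul_iota_pure
    (hact : ∀ (n : ℕ) (x : Fin n → g) (y : g),
      act (pt k x) y = ∑ i : Fin n, pt k (Function.update x i (mul (x i) y)))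
    {a : ℕ} (x : Fin a → g) (z y : g) :
    act (pt k x * TensorAlgebra.ι k z) y
      = act (pt k x) y * TensorAlgebra.ι k z + pt k x * TensorAlgebra.ι k (mul z y) := by
  rw [← pt_snoc, hact (a+1) (Fin.snoc x z) y, hact a x y, Fin.sum_univ_castSucc,
    Finset.sum_mul]
  congr 1
  · refine Finset.sum_congr rfl fun i _ => ?_
    rw [Fin.snoc_castSucc, ← Fin.snoc_update, pt_snoc]
  · rw [Fin.snoc_last, Fin.update_snoc_last, pt_snoc]

lemma act_mul_iota
    (hact : ∀ (n : ℕ) (x : Fin n → g) (y : g),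
      act (pt k x) y = ∑ i : Fin n, pt k (Function.update x i (mul (x i) y)))
    {a : ℕ} {U : TensorAlgebra k g} (hU : U ∈ tensorGrade k g a) (z y : g) :
    act (U * TensorAlgebra.ι k z) y
      = act U y * TensorAlgebra.ι k z + U * TensorAlgebra.ι k (mul z y) := by
  refine grade_induction (P := fun U => act (U * TensorAlgebra.ι k z) y
      = act U y * TensorAlgebra.ι k z + U * TensorAlgebra.ι k (mul z y)) ?_ ?_ ?_ ?_ U hU
  · simp
  · intro u v hu hv
    simp only [add_mul, map_add, LinearMap.add_apply, hu, hv]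
    abel
  · intro c u hu
    simp only [smul_mul_assoc, map_smul, LinearMap.smul_apply, hu, smul_add]
  · intro x; exact act_mul_iota_pure mul act hact x z y

lemma act_der
    (hact : ∀ (n : ℕ) (x : Fin n → g) (y : g),
      act (pt k x) y = ∑ i : Fin n, pt k (Function.update x i (mul (x i) y))) :
    ∀ (b : ℕ) (V : TensorAlgebra k g), V ∈ tensorGrade k g b →
    ∀ (a : ℕ) (U : TensorAlgebra k g), U ∈ tensorGrade k g a → ∀ (y : g),
    act (U * V) y = act U y * V + U * act V y := by
  intro b
  induction b with
  | zero =>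
    intro V hV a U hU y
    refine grade_induction (P := fun V => act (U * V) y = act U y * V + U * act V y)
      ?_ ?_ ?_ ?_ V hV
    · simp
    · intro u v hu hv
      simp only [mul_add, map_add, LinearMap.add_apply, hu, hv]; abel
    · intro c u hu
      simp only [mul_smul_comm, map_smul, LinearMap.smul_apply, hu, smul_add]
    · intro x
      rw [pt_zero, mul_one, mul_one, act_one mul act hact, mul_zero, add_zero]
  | succ b ih =>
    intro V hV a U hU y
    refine grade_induction (P := fun V => act (U * V) y = act U y * V + U * act V y)
      ?_ ?_ ?_ ?_ V hV
    · simp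
    · intro u v hu hv
      simp only [mul_add, map_add, LinearMap.add_apply, hu, hv]; abel
    · intro c u hu
      simp only [mul_smul_comm, map_smul, LinearMap.smul_apply, hu, smul_add]
    · intro x
      rw [← Fin.snoc_init_self x, pt_snoc, ← mul_assoc]
      have hW : pt k (Fin.init x) ∈ tensorGrade k g b := pt_mem _
      rw [act_mul_iota mul act hact (grade_mul b _ hW a U hU) _ y,
        ih _ hW a U hU y, act_mul_iota_pure mul act hact _ _ y]
      rw [add_mul, mul_add, mul_assoc, mul_assoc]
      simp only [mul_assoc]
      abel

lemma D_mul_iota_pure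
    (hD : ∀ (m : ℕ) (x : Fin (m + 1) → g),
      D (pt k x) = ∑ j : Fin (m + 1),
        ∑ i ∈ Finset.univ.filter (fun i : Fin m => i.castSucc < j),
          ((-1 : k) ^ (j : ℕ)) •
            pt k (Function.update (fun a : Fin m => x (j.succAbove a)) i
              (mul (x i.castSucc) (x j))))
    (hact : ∀ (n : ℕ) (x : Fin n → g) (y : g),
      act (pt k x) y = ∑ i : Fin n, pt k (Function.update x i (mul (x i) y)))
    {M : ℕ} (x : Fin (M + 1) → g) (z : g) :
    D (pt k x * TensorAlgebra.ι k z)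
      = D (pt k x) * TensorAlgebra.ι k z + ((-1 : k) ^ (M + 1)) • act (pt k x) z := by
  rw [← pt_snoc, hD (M + 1) (Fin.snoc x z), hD M x, Fin.sum_univ_castSucc]
  congr 1
  · -- castSucc part
    rw [Finset.sum_mul]
    refine Finset.sum_congr rfl fun j₀ _ => ?_
    rw [Finset.sum_mul]
    have hfun : (fun a : Fin (M + 1) => (Fin.snoc x z : Fin (M+2) → g) ((Fin.castSucc j₀).succAbove a))
        = Fin.snoc (α := fun _ => g) (fun a : Fin M => x (j₀.succAbove a)) z := by
      funext a
      refine Fin.lastCases ?_ (fun a₀ => ?_) a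
      · rw [Fin.snoc_last, Fin.succAbove_of_le_castSucc, Fin.succ_last, Fin.snoc_last]
        rw [Fin.le_def]
        simp only [Fin.coe_castSucc, Fin.val_last]
        omega
      · rw [Fin.snoc_castSucc, Fin.castSucc_succAbove_castSucc, Fin.snoc_castSucc]
    have hset : (Finset.univ.filter fun i : Fin (M + 1) =>
          i.castSucc < (Fin.castSucc j₀))
        = (Finset.univ.filter fun i₀ : Fin M => i₀.castSucc < j₀).map
            Fin.castSuccEmb := by
      ext i
      have hemb : ∀ i : Fin M, Fin.castSuccEmb i = i.castSucc := fun _ => rfl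
      simp only [Finset.mem_filter, Finset.mem_univ, true_and, Finset.mem_map,
        hemb, Fin.lt_def, Fin.coe_castSucc]
      constructor
      · intro h
        have hiM : (i : ℕ) < M := by omega
        exact ⟨⟨(i : ℕ), hiM⟩, by simpa using h, by ext; simp⟩
      · rintro ⟨a, ha, rfl⟩
        simpa using ha
    have hemb : ∀ i : Fin M, Fin.castSuccEmb i = i.castSucc := fun _ => rfl
    rw [hset, Finset.sum_map]
    refine Finset.sum_congr rfl fun i₀ _ => ?_
    rw [smul_mul_assoc, ← pt_snoc, Fin.snoc_update]
    simp only [hemb, Fin.coe_castSucc, Fin.snoc_castSucc, hfun]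

  · -- last part
    rw [Finset.filter_true_of_mem (fun i _ => Fin.castSucc_lt_last i)]
    simp only [Fin.succAbove_last, Fin.snoc_castSucc, Fin.snoc_last, Fin.val_last]
    rw [← Finset.smul_sum, ← hact (M + 1) x z]

lemma D_mul_iota
    (hD : ∀ (m : ℕ) (x : Fin (m + 1) → g),
      D (pt k x) = ∑ j : Fin (m + 1),
        ∑ i ∈ Finset.univ.filter (fun i : Fin m => i.castSucc < j),
          ((-1 : k) ^ (j : ℕ)) •
            pt k (Function.update (fun a : Fin m => x (j.succAbove a)) i
              (mul (x i.castSucc) (x j))))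
    (hact : ∀ (n : ℕ) (x : Fin n → g) (y : g),
      act (pt k x) y = ∑ i : Fin n, pt k (Function.update x i (mul (x i) y)))
    {M : ℕ} {U : TensorAlgebra k g} (hU : U ∈ tensorGrade k g (M + 1)) (z : g) :
    D (U * TensorAlgebra.ι k z)
      = D U * TensorAlgebra.ι k z + ((-1 : k) ^ (M + 1)) • act U z := by
  refine grade_induction (P := fun U => D (U * TensorAlgebra.ι k z)
      = D U * TensorAlgebra.ι k z + ((-1 : k) ^ (M + 1)) • act U z) ?_ ?_ ?_ ?_ U hU
  · simp
  · intro u v hu hv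
    simp only [add_mul, map_add, LinearMap.add_apply, hu, hv, smul_add]
    abel
  · intro c u hu
    simp only [smul_mul_assoc, map_smul, LinearMap.smul_apply, hu, smul_add, smul_comm c]
  · intro x; exact D_mul_iota_pure mul D act hD hact x z

lemma iotaInv_iota (x : g) : TensorAlgebra.ιInv (TensorAlgebra.ι k x) = x := by
  simp [TensorAlgebra.ιInv]

variable (L : ℕ → Submodule k (TensorAlgebra k g))

lemma L_sub_grade
    (hL1 : L 1 = tensorGrade k g 1)
    (hLsucc : ∀ n : ℕ, 1 ≤ n → L (n + 1) =
      Submodule.span k {z | ∃ X ∈ L n, ∃ y : g,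
        z = X * TensorAlgebra.ι k y - ((-1 : k) ^ n) • (TensorAlgebra.ι k y * X)}) :
    ∀ m : ℕ, 1 ≤ m → L m ≤ tensorGrade k g m := by
  intro m
  induction m with
  | zero => omega
  | succ m ih =>
    intro _
    match m, ih with
    | 0, _ => rw [hL1]
    | (m' + 1), ih =>
      rw [hLsucc (m' + 1) (by omega)]
      rw [Submodule.span_le]
      rintro z ⟨Xx, hXx, yy, rfl⟩
      have hXg : Xx ∈ tensorGrade k g (m' + 1) := ih (by omega) hXx
      refine sub_mem (grade_mul_iota hXg yy) (Submodule.smul_mem _ _ ?_)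
      have h2 := grade_mul (m' + 1) Xx hXg 1 _ (iota_mem_grade yy)
      convert h2 using 2
      omega

lemma DU
    (hD : ∀ (m : ℕ) (x : Fin (m + 1) → g),
      D (pt k x) = ∑ j : Fin (m + 1),
        ∑ i ∈ Finset.univ.filter (fun i : Fin m => i.castSucc < j),
          ((-1 : k) ^ (j : ℕ)) •
            pt k (Function.update (fun a : Fin m => x (j.succAbove a)) i
              (mul (x i.castSucc) (x j))))
    (hact : ∀ (n : ℕ) (x : Fin n → g) (y : g),
      act (pt k x) y = ∑ i : Fin n, pt k (Function.update x i (mul (x i) y)))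
    (hL1 : L 1 = tensorGrade k g 1)
    (hLsucc : ∀ n : ℕ, 1 ≤ n → L (n + 1) =
      Submodule.span k {z | ∃ X ∈ L n, ∃ y : g,
        z = X * TensorAlgebra.ι k y - ((-1 : k) ^ n) • (TensorAlgebra.ι k y * X)}) :
    ∀ m : ℕ, ∀ Z ∈ L (m + 1), ∀ (a : ℕ) (U : TensorAlgebra k g),
      U ∈ tensorGrade k g (a + 1) →
      D (U * Z) = D U * Z + ((-1 : k) ^ (a + 1)) • (U * D Z)
        + (if m = 0 then ((-1 : k) ^ (a + 1)) • act U (TensorAlgebra.ιInv Z) else 0) := by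
  intro m
  induction m with
  | zero =>
    intro Z hZ a U hU
    rw [hL1] at hZ
    simp only [if_pos rfl]
    refine grade_induction (P := fun Z => D (U * Z) = D U * Z
      + ((-1 : k) ^ (a + 1)) • (U * D Z)
      + ((-1 : k) ^ (a + 1)) • act U (TensorAlgebra.ιInv Z)) ?_ ?_ ?_ ?_ Z hZ
    · simp
    · intro u v hu hv
      simp only [mul_add, map_add, LinearMap.add_apply, hu, hv, smul_add]
      abel
    · intro c u hu
      simp only [mul_smul_comm, map_smul, LinearMap.smul_apply, hu, smul_add, smul_comm c]
    · intro x
      rw [pt_one, D_mul_iota mul D act hD hact (M := a) hU (x 0),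
        D_iota mul D hD, mul_zero, smul_zero, add_zero, iotaInv_iota]
  | succ m ih =>
    intro Z hZ a U hU
    rw [hLsucc (m + 1) (by omega)] at hZ
    simp only [if_neg (Nat.succ_ne_zero m), add_zero]
    refine Submodule.span_induction (p := fun Z _ => D (U * Z) = D U * Z
      + ((-1 : k) ^ (a + 1)) • (U * D Z)) ?_ ?_ ?_ ?_ hZ
    · rintro z ⟨Xx, hX, yy, rfl⟩
      have hXg : Xx ∈ tensorGrade k g (m + 1) :=
        L_sub_grade L hL1 hLsucc (m + 1) (by omega) hX
      have hUXg : U * Xx ∈ tensorGrade k g ((a + m + 1) + 1) := by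
        have := grade_mul (m + 1) Xx hXg (a + 1) U hU
        convert this using 2
        omega
      have A1 := ih Xx hX a U hU
      have A2 := D_mul_iota mul D act hD hact (M := a + m + 1) hUXg yy
      have A3 := D_mul_iota mul D act hD hact (M := a) hU yy
      have A4 := ih Xx hX (a + 1) (U * TensorAlgebra.ι k yy) (grade_mul_iota hU yy)
      have A5 := D_mul_iota mul D act hD hact (M := m) hXg yy
      have A6 := ih Xx hX 0 (TensorAlgebra.ι k yy) (iota_mem_grade yy)
      have A7 := act_der mul act hact (m + 1) Xx hXg (a + 1) U hU yy
      have hDy := D_iota mul D hD yy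
      by_cases hm : m = 0
      · subst hm
        have A8 := act_mul_iota mul act hact hU yy (TensorAlgebra.ιInv Xx)
        have A9 := act_iota mul act hact yy (TensorAlgebra.ιInv Xx)
        simp only [if_pos rfl, if_true] at A1 A4 A6
        rw [mul_sub, mul_smul_comm, ← mul_assoc, ← mul_assoc, map_sub, map_smul,
          A2, A4, A1, A3, A7, A8, map_sub, map_smul, A5, A6, hDy, A9, zero_mul]
        simp only [mul_assoc, mul_sub, sub_mul, mul_add, add_mul, smul_mul_assoc,
          mul_smul_comm, smul_sub, smul_add, smul_smul, mul_zero, zero_mul, smul_zero,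
          add_zero, zero_add, sub_zero]
        match_scalars <;> ring
      · simp only [if_neg hm, add_zero] at A1 A4 A6
        rw [mul_sub, mul_smul_comm, ← mul_assoc, ← mul_assoc, map_sub, map_smul,
          A2, A4, A1, A3, A7, map_sub, map_smul, A5, A6, hDy, zero_mul]
        simp only [mul_assoc, mul_sub, sub_mul, mul_add, add_mul, smul_mul_assoc,
          mul_smul_comm, smul_sub, smul_add, smul_smul, mul_zero, zero_mul, smul_zero,
          add_zero, zero_add, sub_zero]
        match_scalars <;> ring
    · simp
    · intro u v _ _ hu hv
      simp only [mul_add, map_add, hu, hv, smul_add]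
      abel
    · intro c u _ hu
      simp only [mul_smul_comm, map_smul, hu, smul_add, smul_comm c]

lemma prod_grade : ∀ (j : ℕ) (nn : Fin j → ℕ) (XX : Fin j → TensorAlgebra k g),
    (∀ i, XX i ∈ tensorGrade k g (nn i)) →
    (List.ofFn XX).prod ∈ tensorGrade k g (∑ i, nn i) := by
  intro j
  induction j with
  | zero => intro nn XX h; simpa [List.ofFn_zero] using one_mem_grade
  | succ j ihj =>
    intro nn XX h
    rw [List.ofFn_succ, List.prod_cons, Fin.sum_univ_succ]
    exact grade_mul _ _ (ihj _ _ (fun i => h i.succ)) _ _ (h 0)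

lemma main_aux
    (hD : ∀ (m : ℕ) (x : Fin (m + 1) → g),
      D (pt k x) = ∑ j : Fin (m + 1),
        ∑ i ∈ Finset.univ.filter (fun i : Fin m => i.castSucc < j),
          ((-1 : k) ^ (j : ℕ)) •
            pt k (Function.update (fun a : Fin m => x (j.succAbove a)) i
              (mul (x i.castSucc) (x j))))
    (hact : ∀ (n : ℕ) (x : Fin n → g) (y : g),
      act (pt k x) y = ∑ i : Fin n, pt k (Function.update x i (mul (x i) y)))
    (hL1 : L 1 = tensorGrade k g 1)
    (hLsucc : ∀ n : ℕ, 1 ≤ n → L (n + 1) =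
      Submodule.span k {z | ∃ X ∈ L n, ∃ y : g,
        z = X * TensorAlgebra.ι k y - ((-1 : k) ^ n) • (TensorAlgebra.ι k y * X)}) :
    ∀ (j : ℕ), 1 ≤ j → ∀ (n : Fin j → ℕ), (∀ i, 1 ≤ n i) →
    ∀ (X : Fin j → TensorAlgebra k g), (∀ i, X i ∈ L (n i)) →
    ∀ (y : Fin j → g), (∀ i, n i = 1 → X i = TensorAlgebra.ι k (y i)) →
    D (List.ofFn X).prod =
      (∑ i : Fin j, ((-1 : k) ^ (((List.ofFn n).take (i : ℕ)).sum)) •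
        (((List.ofFn X).take (i : ℕ)).prod * D (X i)
          * ((List.ofFn X).drop ((i : ℕ) + 1)).prod))
      + ∑ i ∈ Finset.univ.filter (fun i : Fin j => n i = 1),
          ((-1 : k) ^ (((List.ofFn n).take (i : ℕ)).sum)) •
            (act (((List.ofFn X).take (i : ℕ)).prod) (y i)
              * ((List.ofFn X).drop ((i : ℕ) + 1)).prod) := by
  intro j
  induction j with
  | zero => omega
  | succ j ihj =>
    intro _ n hn X hX y hy
    rcases Nat.eq_zero_or_pos j with hj0 | hj1
    · -- base case: one factor
      subst hj0
      simp only [List.ofFn_succ, List.ofFn_zero, List.prod_cons, List.prod_nil, mul_one,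
        Finset.sum_filter, Fin.sum_univ_succ, Fin.sum_univ_zero, Fin.val_zero,
        List.take_zero, List.sum_nil, pow_zero, one_smul, List.drop_succ_cons,
        List.drop_nil, one_mul, add_zero]
      rw [act_one mul act hact]
      simp
    · -- inductive step
      have hofX : List.ofFn X = (List.ofFn fun i : Fin j => X i.castSucc)
          ++ [X (Fin.last j)] := by
        rw [List.ofFn_succ', List.concat_eq_append]
      have hofn : List.ofFn n = (List.ofFn fun i : Fin j => n i.castSucc)
          ++ [n (Fin.last j)] := by
        rw [List.ofFn_succ', List.concat_eq_append]
      set X' : Fin j → TensorAlgebra k g := fun i => X i.castSucc with hX'def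
      set n' : Fin j → ℕ := fun i => n i.castSucc with hn'def
      set y' : Fin j → g := fun i => y i.castSucc with hy'def
      set R : TensorAlgebra k g := (List.ofFn X').prod with hRdef
      set N' : ℕ := ∑ i, n' i with hN'def
      have hR : R ∈ tensorGrade k g N' :=
        prod_grade j n' X' (fun i =>
          L_sub_grade L hL1 hLsucc (n' i) (hn _) (hX _))
      have hN'pos : 1 ≤ N' := by
        calc 1 ≤ n' ⟨0, hj1⟩ := hn _
        _ ≤ N' := Finset.single_le_sum (f := n') (fun i _ => Nat.zero_le _)
            (Finset.mem_univ _)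
      obtain ⟨M, hM⟩ : ∃ M, N' = M + 1 := ⟨N' - 1, by omega⟩
      have hXlast : X (Fin.last j) ∈ L ((n (Fin.last j) - 1) + 1) := by
        have h1 : (n (Fin.last j) - 1) + 1 = n (Fin.last j) := by
          have := hn (Fin.last j); omega
        rw [h1]; exact hX _
      have hmain : D ((List.ofFn X).prod)
          = D R * X (Fin.last j) + ((-1 : k) ^ N') • (R * D (X (Fin.last j)))
            + (if n (Fin.last j) = 1
                then ((-1 : k) ^ N') • act R (y (Fin.last j)) else 0) := by
        rw [hofX, List.prod_append, List.prod_singleton]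
        have := DU mul D act L hD hact hL1 hLsucc (n (Fin.last j) - 1)
          (X (Fin.last j)) hXlast M R (hM ▸ hR)
        rw [this, ← hM]
        have hnl := hn (Fin.last j)
        by_cases hlast : n (Fin.last j) = 1
        · rw [if_pos (by omega : n (Fin.last j) - 1 = 0), if_pos hlast,
            hy _ hlast, iotaInv_iota]
        · rw [if_neg (by omega : ¬ n (Fin.last j) - 1 = 0), if_neg hlast]
      have hIH := ihj hj1 n' (fun i => hn _) X' (fun i => hX _) y'
        (fun i h => hy _ h)
      -- list component facts
      have hc1 : ∀ i : Fin j, ((List.ofFn n).take ((i.castSucc : Fin (j+1)) : ℕ)).sum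
          = ((List.ofFn n').take (i : ℕ)).sum := by
        intro i
        rw [hofn, Fin.coe_castSucc, List.take_append_of_le_length (by simp only [List.length_ofFn]; omega)]
      have hc2 : ∀ i : Fin j, ((List.ofFn X).take ((i.castSucc : Fin (j+1)) : ℕ)).prod
          = ((List.ofFn X').take (i : ℕ)).prod := by
        intro i
        rw [hofX, Fin.coe_castSucc, List.take_append_of_le_length (by simp only [List.length_ofFn]; omega)]
      have hc3 : ∀ i : Fin j, ((List.ofFn X).drop (((i.castSucc : Fin (j+1)) : ℕ) + 1)).prod
          = ((List.ofFn X').drop ((i : ℕ) + 1)).prod * X (Fin.last j) := by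
        intro i
        rw [hofX, Fin.coe_castSucc, List.drop_append_of_le_length
          (by simp only [List.length_ofFn]; omega),
          List.prod_append, List.prod_singleton]
      have hc4 : ((List.ofFn n).take ((Fin.last j : Fin (j+1)) : ℕ)).sum = N' := by
        rw [hofn, Fin.val_last, List.take_append_of_le_length (by simp),
          List.take_of_length_le (by simp), List.sum_ofFn]
      have hc5 : ((List.ofFn X).take ((Fin.last j : Fin (j+1)) : ℕ)).prod = R := by
        rw [hofX, Fin.val_last, List.take_append_of_le_length (by simp),
          List.take_of_length_le (by simp)]
      have hc6 : ((List.ofFn X).drop (((Fin.last j : Fin (j+1)) : ℕ) + 1)).prod = 1 := by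
        rw [hofX, Fin.val_last, List.drop_eq_nil_of_le (by simp), List.prod_nil]
      rw [hmain, hIH, Finset.sum_filter, Finset.sum_filter,
        Fin.sum_univ_castSucc, Fin.sum_univ_castSucc (n := j)]
      simp only [hc1, hc2, hc3, hc4, hc5, hc6, mul_one]
      rw [add_mul, Finset.sum_mul, Finset.sum_mul]
      simp only [smul_mul_assoc, mul_assoc, ite_mul, zero_mul]
      abel

end Aux

/-- for a (right) Leibniz algebra `g` over a field `k` of characteristic zero,
let `j ≥ 1`, `Xᵢ ∈ L_{nᵢ}` (`1 ≤ i ≤ j`, `nᵢ ≥ 1`), and set `n(i) = n₁ + … + n_{i−1}`,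
`N = n₁ + … + n_j`.  Then
`d(X₁⊗…⊗X_j) = Σᵢ (−1)^{n(i)} X₁⊗…⊗(dXᵢ)⊗…⊗X_j
  + Σ_{i : nᵢ = 1} (−1)^{n(i)} ((X₁⊗…⊗X_{i−1})·Xᵢ)⊗X_{i+1}⊗…⊗X_j`,
where in the second sum `Xᵢ ∈ L 1 = g` is represented as `ι (y i)` with `y i : g`,
and the dot is the diagonal right action (which vanishes on scalars, so the `i = 1` term of
the second sum is zero). -/
theorem leibniz_differential_of_product_of_primitives
    {k : Type*} [Field k] [CharZero k]
    {g : Type*} [AddCommGroup g] [Module k g]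
    (mul : g →ₗ[k] g →ₗ[k] g)
    (hleib : ∀ x y z : g, mul x (mul y z) = mul (mul x y) z - mul (mul x z) y)
    (D : TensorAlgebra k g →ₗ[k] TensorAlgebra k g)
    (hD : ∀ (m : ℕ) (x : Fin (m + 1) → g),
      D (pt k x) = ∑ j : Fin (m + 1),
        ∑ i ∈ Finset.univ.filter (fun i : Fin m => i.castSucc < j),
          ((-1 : k) ^ (j : ℕ)) •
            pt k (Function.update (fun a : Fin m => x (j.succAbove a)) i
              (mul (x i.castSucc) (x j))))
    (act : TensorAlgebra k g →ₗ[k] g →ₗ[k] TensorAlgebra k g)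
    (hact : ∀ (n : ℕ) (x : Fin n → g) (y : g),
      act (pt k x) y = ∑ i : Fin n, pt k (Function.update x i (mul (x i) y)))
    (L : ℕ → Submodule k (TensorAlgebra k g))
    (hL1 : L 1 = tensorGrade k g 1)
    (hLsucc : ∀ n : ℕ, 1 ≤ n → L (n + 1) =
      Submodule.span k {z | ∃ X ∈ L n, ∃ y : g,
        z = X * TensorAlgebra.ι k y - ((-1 : k) ^ n) • (TensorAlgebra.ι k y * X)})
    (j : ℕ) (hj : 1 ≤ j) (n : Fin j → ℕ) (hn : ∀ i, 1 ≤ n i)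
    (X : Fin j → TensorAlgebra k g) (hX : ∀ i, X i ∈ L (n i))
    (y : Fin j → g) (hy : ∀ i, n i = 1 → X i = TensorAlgebra.ι k (y i)) :
    D (List.ofFn X).prod =
      (∑ i : Fin j, ((-1 : k) ^ (((List.ofFn n).take (i : ℕ)).sum)) •
        (((List.ofFn X).take (i : ℕ)).prod * D (X i)
          * ((List.ofFn X).drop ((i : ℕ) + 1)).prod))
      + ∑ i ∈ Finset.univ.filter (fun i : Fin j => n i = 1),
          ((-1 : k) ^ (((List.ofFn n).take (i : ℕ)).sum)) •
            (act (((List.ofFn X).take (i : ℕ)).prod) (y i)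
              * ((List.ofFn X).drop ((i : ℕ) + 1)).prod) := by
  exact main_aux mul D act L hD hact hL1 hLsucc j hj n hn X hX y hy
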